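/- The limit of α·ω_C(α,3) as α → ∞ equals (2·ln 2)/3, i.e. ω_C(α,3) is asymptotic to (2 ln 2)/(3α) ≈ 0.46209/α. -/

import Mathlib

/-- Ω(t,α,3) = t + α·log₂(1 − (3/8)t² + (1/4)t³) -/
noncomputable def Omega3 (t α : ℝ) : ℝ :=
  t + α * Real.logb 2 (1 - (3 / 8) * t ^ 2 + (1 / 4) * t ^ 3)

/-- ω_C(α,3) = sup_{t∈[0,1]} Ω(t,α,3) -/
noncomputable def omegaC3 (α : ℝ) : ℝ :=
  sSup ((fun t => Omega3 t α) '' Set.Icc (0 : ℝ) 1)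

/-!
Write `1 − (3/8)t² + (1/4)t³ = 1 − s(t)` with `s(t) = t²(3 − 2t)/8 ≈ 3t²/8`, and `ℓ = log 2`.
By `−s/(1−s) ≤ log (1 − s) ≤ −s`, in the variable `u = αt` the quantity `α·Ω(t,α,3)` is
`u − 3u²/(8ℓ)` up to an error `O(u³/α)`, and the parabola has maximum `2ℓ/3` at `u = 4ℓ/3`.
For the upper bound the cubic error is only harmless for `u ≤ 8ℓ`; for `u ≥ 8ℓ` the crude bound
`s(t) ≥ t²/8` already makes `α·Ω` nonpositive. This gives
`2ℓ/3 − 8ℓ³/(9α²) ≤ α·ω_C(α,3) ≤ 2ℓ/3 + 128ℓ²/α`.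
-/

open Real Set Filter Topology

noncomputable def deficit3 (t : ℝ) : ℝ := t ^ 2 * (3 - 2 * t) / 8

lemma Omega3_eq (t α : ℝ) : Omega3 t α = t + α * log (1 - deficit3 t) / log 2 := by
  rw [Omega3, logb, deficit3, mul_div_assoc]
  ring_nf

lemma deficit3_mem_Icc {t : ℝ} (ht : t ∈ Icc (0 : ℝ) 1) : deficit3 t ∈ Icc (0 : ℝ) (3 / 8) := by
  obtain ⟨ht0, ht1⟩ := ht
  unfold deficit3
  constructor <;> nlinarith [sq_nonneg t, mul_nonneg (sq_nonneg t) ht0]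

lemma Omega3_le {t α : ℝ} (ht : deficit3 t < 1) (hα : 0 ≤ α) :
    Omega3 t α ≤ t - α * deficit3 t / log 2 := by
  have hlog : log (1 - deficit3 t) ≤ -deficit3 t := by
    linarith [log_le_sub_one_of_pos (sub_pos.2 ht)]
  calc Omega3 t α = t + α * log (1 - deficit3 t) / log 2 := Omega3_eq t α
    _ ≤ t + α * -deficit3 t / log 2 := by gcongr
    _ = _ := by ring

lemma le_Omega3 {t α : ℝ} (ht : deficit3 t < 1) (hα : 0 ≤ α) :
    t - α * (deficit3 t / (1 - deficit3 t)) / log 2 ≤ Omega3 t α := by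
  have hlog : -(deficit3 t / (1 - deficit3 t)) ≤ log (1 - deficit3 t) := by
    have h := one_sub_inv_le_log_of_pos (sub_pos.2 ht)
    have h1 : 1 - (1 - deficit3 t)⁻¹ = -(deficit3 t / (1 - deficit3 t)) := by
      field_simp [(sub_pos.2 ht).ne']
      ring
    linarith
  calc t - α * (deficit3 t / (1 - deficit3 t)) / log 2
      = t + α * -(deficit3 t / (1 - deficit3 t)) / log 2 := by ring
    _ ≤ t + α * log (1 - deficit3 t) / log 2 := by gcongr
    _ = Omega3 t α := (Omega3_eq t α).symm

lemma bddAbove_Omega3_image {α : ℝ} (hα : 0 ≤ α) :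
    BddAbove ((fun t => Omega3 t α) '' Icc (0 : ℝ) 1) := by
  refine ⟨1, ?_⟩
  rintro _ ⟨t, ht, rfl⟩
  have hs := deficit3_mem_Icc ht
  calc Omega3 t α ≤ t - α * deficit3 t / log 2 := Omega3_le (by linarith [hs.2]) hα
    _ ≤ 1 := by
      have : 0 ≤ α * deficit3 t / log 2 := by have := hs.1; positivity
      linarith [ht.2]

lemma mul_Omega3_le {t α : ℝ} (ht : t ∈ Icc (0 : ℝ) 1) (hα : 0 < α) :
    α * Omega3 t α ≤ 2 * log 2 / 3 + 128 * log 2 ^ 2 / α := by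
  have hℓ : 0 < log 2 := log_pos one_lt_two
  have hs := deficit3_mem_Icc ht
  set u := α * t with hu
  have hu0 : 0 ≤ u := mul_nonneg hα.le ht.1
  have hαs : α * (α * deficit3 t / log 2) = u ^ 2 * (3 - 2 * t) / (8 * log 2) := by
    rw [hu, deficit3]; field_simp
  have hbound : α * Omega3 t α ≤ u - u ^ 2 * (3 - 2 * t) / (8 * log 2) := by
    calc α * Omega3 t α ≤ α * (t - α * deficit3 t / log 2) :=
          mul_le_mul_of_nonneg_left (Omega3_le (by linarith [hs.2]) hα.le) hα.le
      _ = _ := by rw [mul_sub, hαs]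
  rcases le_total u (8 * log 2) with hsmall | hlarge
  · have hpar : u - 3 * u ^ 2 / (8 * log 2) ≤ 2 * log 2 / 3 := by
      have hsq : 0 ≤ 3 * (u - 4 * log 2 / 3) ^ 2 / (8 * log 2) := by positivity
      have : 2 * log 2 / 3 - (u - 3 * u ^ 2 / (8 * log 2))
          = 3 * (u - 4 * log 2 / 3) ^ 2 / (8 * log 2) := by field_simp; ring
      linarith
    have hcube : u ^ 2 * (2 * t) / (8 * log 2) ≤ 128 * log 2 ^ 2 / α := by
      have ht' : t = u / α := by rw [hu]; field_simp
      rw [ht', div_le_div_iff₀ (by positivity) hα]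
      have : u ^ 3 ≤ (8 * log 2) ^ 3 := pow_le_pow_left₀ hu0 hsmall 3
      field_simp
      nlinarith
    have : u - u ^ 2 * (3 - 2 * t) / (8 * log 2)
        = u - 3 * u ^ 2 / (8 * log 2) + u ^ 2 * (2 * t) / (8 * log 2) := by ring
    linarith
  · have hneg : u - u ^ 2 * (3 - 2 * t) / (8 * log 2) ≤ 0 := by
      rw [sub_nonpos, le_div_iff₀ (by positivity)]
      nlinarith [ht.2, mul_nonneg hu0 hu0]
    have : 0 ≤ 2 * log 2 / 3 + 128 * log 2 ^ 2 / α := by positivity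
    linarith

lemma mul_omegaC3_le {α : ℝ} (hα : 0 < α) :
    α * omegaC3 α ≤ 2 * log 2 / 3 + 128 * log 2 ^ 2 / α := by
  rw [← le_div_iff₀' hα]
  refine csSup_le ((nonempty_Icc.2 zero_le_one).image _) ?_
  rintro _ ⟨t, ht, rfl⟩
  exact (le_div_iff₀' hα).2 (mul_Omega3_le ht hα)

lemma le_mul_omegaC3 {α : ℝ} (hα : 4 * log 2 / 3 ≤ α) :
    2 * log 2 / 3 - 8 * log 2 ^ 3 / (9 * α ^ 2) ≤ α * omegaC3 α := by
  have hℓ : 0 < log 2 := log_pos one_lt_two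
  have hα0 : 0 < α := lt_of_lt_of_le (by positivity) hα
  set t := 4 * log 2 / 3 / α with ht_def
  have ht : t ∈ Icc (0 : ℝ) 1 := ⟨by positivity, (div_le_one hα0).2 hα⟩
  have hαt : α * t = 4 * log 2 / 3 := by rw [ht_def]; field_simp
  set s := deficit3 t with hs_def
  have hs : s ∈ Icc (0 : ℝ) (3 / 8) := deficit3_mem_Icc ht
  have hs0 : 0 ≤ s := hs.1
  have hαs : α ^ 2 * s ≤ 2 * log 2 ^ 2 / 3 := by
    have : s ≤ 3 * t ^ 2 / 8 := by rw [hs_def, deficit3]; nlinarith [sq_nonneg t, ht.1]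
    nlinarith [sq_nonneg α]
  have hquot : s / (1 - s) ≤ s * (1 + 2 * s) := by
    rw [div_le_iff₀ (by linarith [hs.2])]
    nlinarith [hs.1, hs.2, mul_nonneg hs.1 hs.1]
  have herr : α ^ 2 * (s / (1 - s)) ≤ 2 * log 2 ^ 2 / 3 + 8 * log 2 ^ 4 / (9 * α ^ 2) := by
    have hs' : s ≤ 2 * log 2 ^ 2 / (3 * α ^ 2) := by
      rw [le_div_iff₀ (by positivity)]; linarith
    calc α ^ 2 * (s / (1 - s)) ≤ α ^ 2 * s + 2 * (α ^ 2 * s) * s := by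
          nlinarith [mul_le_mul_of_nonneg_left hquot (sq_nonneg α)]
      _ ≤ 2 * log 2 ^ 2 / 3 + 2 * (2 * log 2 ^ 2 / 3) * (2 * log 2 ^ 2 / (3 * α ^ 2)) := by
          gcongr
      _ = _ := by field_simp; ring
  calc 2 * log 2 / 3 - 8 * log 2 ^ 3 / (9 * α ^ 2)
      = α * t - (2 * log 2 ^ 2 / 3 + 8 * log 2 ^ 4 / (9 * α ^ 2)) / log 2 := by
        rw [hαt]; field_simp; ring
    _ ≤ α * t - α ^ 2 * (s / (1 - s)) / log 2 := by gcongr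
    _ = α * (t - α * (s / (1 - s)) / log 2) := by ring
    _ ≤ α * Omega3 t α := mul_le_mul_of_nonneg_left (le_Omega3 (by linarith [hs.2]) hα0.le) hα0.le
    _ ≤ α * omegaC3 α :=
        mul_le_mul_of_nonneg_left (le_csSup (bddAbove_Omega3_image hα0.le) (mem_image_of_mem _ ht))
          hα0.le

theorem omegaC3_asymptotic :
    Filter.Tendsto (fun α : ℝ => α * omegaC3 α) Filter.atTop
      (nhds (2 * Real.log 2 / 3)) := by
  have lower : Tendsto (fun α : ℝ => 2 * log 2 / 3 - 8 * log 2 ^ 3 / (9 * α ^ 2)) atTop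
      (𝓝 (2 * log 2 / 3)) := by
    have h : Tendsto (fun α : ℝ => 8 * log 2 ^ 3 / (9 * α ^ 2)) atTop (𝓝 0) :=
      tendsto_const_nhds.div_atTop <|
        (tendsto_pow_atTop two_ne_zero).const_mul_atTop (by norm_num : (0 : ℝ) < 9)
    simpa using h.const_sub (2 * log 2 / 3)
  have upper : Tendsto (fun α : ℝ => 2 * log 2 / 3 + 128 * log 2 ^ 2 / α) atTop
      (𝓝 (2 * log 2 / 3)) := by
    have h : Tendsto (fun α : ℝ => 128 * log 2 ^ 2 / α) atTop (𝓝 0) :=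
      tendsto_const_nhds.div_atTop tendsto_id
    simpa using h.const_add (2 * log 2 / 3)
  refine tendsto_of_tendsto_of_tendsto_of_le_of_le' lower upper ?_ ?_
  · filter_upwards [eventually_ge_atTop (4 * log 2 / 3)] with α hα using le_mul_omegaC3 hα
  · filter_upwards [eventually_gt_atTop 0] with α hα using mul_omegaC3_le hα
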